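/- For positive δ, satisfaction of a δ-labelled τ-path reduces to reachability plus endpoint satisfaction: if δ is positive then p ↠^δ_τ p' (a τ-path along which every state satisfies δ) holds if and only if p ↠_τ p' and p' ⊨ δ. -/

import Mathlib

variable {X A : Type*}

/-- Formulas of Hennessy-Milner Logic with Until. `none` is the silent action τ. -/
inductive HMLU (A : Type*) where
  | top : HMLU A
  | neg : HMLU A → HMLU A
  | and : HMLU A → HMLU A → HMLU A
  | dia : HMLU A → Option A → HMLU A → HMLU A

/-- Satisfaction: `p ⊨ δ⟨α⟩ψ` iff there is a τ-path from `p` along which every state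
satisfies `δ`, ending in a state that `α`-steps to a state satisfying `ψ`. -/
def Sat (step : Option A → X → X → Prop) : HMLU A → X → Prop
  | .top, _ => True
  | .neg φ, p => ¬ Sat step φ p
  | .and φ ψ, p => Sat step φ p ∧ Sat step ψ p
  | .dia δ α ψ, p => ∃ p' p'', Sat step δ p ∧
      Relation.ReflTransGen (fun x y => step none x y ∧ Sat step δ y) p p' ∧
      step α p' p'' ∧ Sat step ψ p''

mutual
  /-- Positive HMLU formulas. -/
  inductive Positive : HMLU A → Prop
    | top : Positive .top
    | neg {φ : HMLU A} : Negative φ → Positive (.neg φ)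
    | and {φ ψ : HMLU A} : Positive φ → Positive ψ → Positive (.and φ ψ)
    | dia {δ ψ : HMLU A} {α : Option A} : Positive δ → Positive (.dia δ α ψ)
  /-- Negative HMLU formulas. -/
  inductive Negative : HMLU A → Prop
    | top : Negative .top
    | neg {φ : HMLU A} : Positive φ → Negative (.neg φ)
    | and {φ ψ : HMLU A} : Negative φ → Negative ψ → Negative (.and φ ψ)
end

/-- Good formulas: every diamond subformula has a positive left-hand side. -/
inductive Good : HMLU A → Prop
  | top : Good .top
  | neg {φ : HMLU A} : Good φ → Good (.neg φ)
  | and {φ ψ : HMLU A} : Good φ → Good ψ → Good (.and φ ψ)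
  | dia {δ ψ : HMLU A} {α : Option A} : Positive δ → Good δ → Good ψ → Good (.dia δ α ψ)

/-- `p ↠^δ_τ p'`: a τ-path from `p` to `p'` along which every state satisfies `δ`. -/
def DPath (step : Option A → X → X → Prop) (δ : HMLU A) (p p' : X) : Prop :=
  Sat step δ p ∧ Relation.ReflTransGen (fun x y => step none x y ∧ Sat step δ y) p p'

/- Positive formulas are preserved backwards along τ-steps and negative ones forwards, by
mutual induction; for `δ⟨α⟩ψ` the δ-path witnessing satisfaction at `q` is simply extended by
the step `p →τ q`. Hence when `δ` is positive, `δ` holding at the end of a τ-path spreads back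
to every state of the path. -/

theorem Relation.ReflTransGen.and_target_of_backward_closed {r : X → X → Prop} {P : X → Prop}
    (hP : ∀ a b, r a b → P b → P a) {a b : X} (hab : ReflTransGen r a b) (hb : P b) :
    P a ∧ ReflTransGen (fun x y => r x y ∧ P y) a b := by
  induction hab using ReflTransGen.head_induction_on with
  | refl => exact ⟨hb, .refl⟩
  | head hac _ ih => exact ⟨hP _ _ hac ih.1, .head ⟨hac, ih.1⟩ ih.2⟩

section
variable {step : Option A → X → X → Prop}

mutual
theorem Positive.sat_of_tau_step {φ : HMLU A} (hφ : Positive φ) {p q : X}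
    (hpq : step none p q) (hq : Sat step φ q) : Sat step φ p :=
  match φ, hφ, hq with
  | _, .top, _ => trivial
  | _, .neg hφ, hq => fun hp => hq (hφ.sat_of_tau_step hpq hp)
  | _, .and hφ hψ, ⟨hφq, hψq⟩ => ⟨hφ.sat_of_tau_step hpq hφq, hψ.sat_of_tau_step hpq hψq⟩
  | _, .dia hδ, ⟨p', p'', hδq, hpath, hα, hψ⟩ =>
    ⟨p', p'', hδ.sat_of_tau_step hpq hδq, .head ⟨hpq, hδq⟩ hpath, hα, hψ⟩

theorem Negative.sat_of_tau_step {φ : HMLU A} (hφ : Negative φ) {p q : X}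
    (hpq : step none p q) (hp : Sat step φ p) : Sat step φ q :=
  match φ, hφ, hp with
  | _, .top, _ => trivial
  | _, .neg hφ, hp => fun hq => hp (hφ.sat_of_tau_step hpq hq)
  | _, .and hφ hψ, ⟨hφp, hψp⟩ => ⟨hφ.sat_of_tau_step hpq hφp, hψ.sat_of_tau_step hpq hψp⟩
end

theorem DPath.sat_right {δ : HMLU A} {p p' : X} (h : DPath step δ p p') : Sat step δ p' := by
  obtain ⟨hp, hpath⟩ := h
  induction hpath with
  | refl => exact hp
  | tail _ hstep _ => exact hstep.2

theorem DPath.tauStar {δ : HMLU A} {p p' : X} (h : DPath step δ p p') :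
    Relation.ReflTransGen (step none) p p' :=
  Relation.ReflTransGen.mono (fun _ _ hxy => hxy.1) _ _ h.2

theorem Positive.dpath_of_tauStar {δ : HMLU A} (hδ : Positive δ) {p p' : X}
    (hpath : Relation.ReflTransGen (step none) p p') (hp' : Sat step δ p') : DPath step δ p p' :=
  hpath.and_target_of_backward_closed (P := Sat step δ) (fun _ _ => hδ.sat_of_tau_step) hp'

end

theorem dpath_iff_tauStar_and_sat (step : Option A → X → X → Prop)
    (htau : ∀ p : X, step none p p) (δ : HMLU A) (hδ : Positive δ) (p p' : X) :
    DPath step δ p p' ↔ Relation.ReflTransGen (step none) p p' ∧ Sat step δ p' :=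
  ⟨fun h => ⟨h.tauStar, h.sat_right⟩, fun ⟨hpath, hp'⟩ => hδ.dpath_of_tauStar hpath hp'⟩
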